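/- Solution of the lower-bound instance (Lemma A.1): the function x ↦ ∑_{i=1}^n f_i(x) attains its minimum over ℓ² at the unique point x* with coordinates x*_l = ρ^l (l ≥ 1), and the minimum value equals n(L − μ)(1 − ρ)/12. -/

import Mathlib

open scoped BigOperators

/-- The real Hilbert space `ℓ²` of square-summable sequences (indexed from `0`; the paper's
coordinate `l ≥ 1` corresponds to the index `l - 1`). -/
abbrev ell2 : Type := lp (fun _ : ℕ => ℝ) 2

/-- The function stored at the nodes of `V₁`:
`f(x) = (μ/2)‖x‖² + ((L−μ)/4)[(x_1 − 1)² + ∑_{l≥1} (x_{2l} − x_{2l+1})²]` (paper coordinates). -/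
noncomputable def fNodeV1 (μ L : ℝ) (x : ell2) : ℝ :=
  (μ / 2) * ‖x‖ ^ 2 +
    ((L - μ) / 4) * ((x 0 - 1) ^ 2 + ∑' l : ℕ, (x (2 * l + 1) - x (2 * l + 2)) ^ 2)

/-- The function stored at the nodes of `V₂`: `f(x) = (μ/2)‖x‖²`. -/
noncomputable def fNodeV2 (μ : ℝ) (x : ell2) : ℝ := (μ / 2) * ‖x‖ ^ 2

/-- The function stored at the nodes of `V₃`:
`f(x) = (μ/2)‖x‖² + ((L−μ)/4) ∑_{l≥1} (x_{2l−1} − x_{2l})²` (paper coordinates). -/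
noncomputable def fNodeV3 (μ L : ℝ) (x : ell2) : ℝ :=
  (μ / 2) * ‖x‖ ^ 2 + ((L - μ) / 4) * ∑' l : ℕ, (x (2 * l) - x (2 * l + 1)) ^ 2

/-- The function `f_i` for node `i ∈ {1, …, n}` with `n = 3m`:
nodes `1 … m` form `V₁`, nodes `m+1 … 2m` form `V₂`, nodes `2m+1 … 3m` form `V₃`. -/
noncomputable def fNode (μ L : ℝ) (m i : ℕ) (x : ell2) : ℝ :=
  if i ≤ m then fNodeV1 μ L x else if i ≤ 2 * m then fNodeV2 μ x else fNodeV3 μ L x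

/-!
Each of the three node functions occurs `m` times, and the even and odd difference terms of `V₁`
and `V₃` merge into the full chain `∑_{l ≥ 0} (x_l - x_{l+1})²` with the boundary value `x_0 = 1`.
So the objective is `m` times `E(x) = a‖x‖² + b ∑_{l ≥ 0} (x_l - x_{l+1})²` with `a = 3μ/2` and
`b = (L-μ)/4`. Expanding `E(x* + h)` gives `E(x*)`, a term linear in `h`, and the homogeneous
quadratic part at `h`, which is positive for `h ≠ 0`. Telescoping shows that the linear term is
`2 (aρ - b(1-ρ)²) ∑ ρ^l h_l`, and `ρ` is exactly the root in `(-1, 1)` of `aρ = b(1-ρ)²`;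
summing the geometric series then gives `E(x*) = b(1-ρ)`.
-/

theorem Summable.mul_of_summable_sq {ι : Type*} {u v : ι → ℝ} (hu : Summable fun i => u i ^ 2)
    (hv : Summable fun i => v i ^ 2) : Summable fun i => u i * v i :=
  Summable.of_norm_bounded ((hu.add hv).div_const 2) fun i => by
    rw [Real.norm_eq_abs, abs_mul]
    nlinarith [sq_nonneg (|u i| - |v i|), sq_abs (u i), sq_abs (v i)]

theorem tsum_add_sq {ι : Type*} {u v : ι → ℝ} (hu : Summable fun i => u i ^ 2)
    (hv : Summable fun i => v i ^ 2) :
    ∑' i, (u i + v i) ^ 2 = ∑' i, u i ^ 2 + 2 * ∑' i, u i * v i + ∑' i, v i ^ 2 := by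
  have huv := (hu.mul_of_summable_sq hv).mul_left 2
  rw [← tsum_mul_left, ← hu.tsum_add huv, ← (hu.add huv).tsum_add hv]
  exact tsum_congr fun i => by ring

theorem Summable.sq_sub_succ {u : ℕ → ℝ} (hu : Summable fun k => u k ^ 2) :
    Summable fun k => (u k - u (k + 1)) ^ 2 :=
  .of_nonneg_of_le (fun _ => sq_nonneg _)
    (fun k => by nlinarith [sq_nonneg (u k + u (k + 1))])
    ((hu.add ((summable_nat_add_iff 1).2 hu)).mul_left 2)

/-- `pathEnergy a b c x = a ∑ xₖ² + b ∑_{k ≥ 0} (x_{k-1} - x_k)²` with the node `x_{-1}`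
pinned to the value `c`. -/
noncomputable def pathEnergy (a b c : ℝ) (x : ℕ → ℝ) : ℝ :=
  a * ∑' k, x k ^ 2 + b * ((x 0 - c) ^ 2 + ∑' k, (x k - x (k + 1)) ^ 2)

section PathEnergy

variable {a b c ρ : ℝ} {y h : ℕ → ℝ}

theorem pathEnergy_add (hy : Summable fun k => y k ^ 2) (hh : Summable fun k => h k ^ 2) :
    pathEnergy a b c (y + h) = pathEnergy a b c y +
      2 * (a * ∑' k, y k * h k +
        b * ((y 0 - c) * h 0 + ∑' k, (y k - y (k + 1)) * (h k - h (k + 1)))) +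
      pathEnergy a b 0 h := by
  have hΔ : ∀ k, (y k + h k - (y (k + 1) + h (k + 1))) ^ 2 =
      ((y k - y (k + 1)) + (h k - h (k + 1))) ^ 2 := fun k => by ring
  simp only [pathEnergy, Pi.add_apply]
  rw [tsum_add_sq hy hh, tsum_congr hΔ, tsum_add_sq hy.sq_sub_succ hh.sq_sub_succ]
  ring

theorem pathEnergy_pos_of_ne_zero (ha : 0 < a) (hb : 0 ≤ b) (hh : Summable fun k => h k ^ 2)
    (hne : h ≠ 0) : 0 < pathEnergy a b 0 h := by
  obtain ⟨k, hk⟩ := Function.ne_iff.1 hne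
  have hsq : 0 < ∑' k, h k ^ 2 := hh.tsum_pos (fun _ => sq_nonneg _) k (sq_pos_of_ne_zero hk)
  have hdiff : 0 ≤ (h 0 - 0) ^ 2 + ∑' k, (h k - h (k + 1)) ^ 2 :=
    add_nonneg (sq_nonneg _) (tsum_nonneg fun _ => sq_nonneg _)
  exact add_pos_of_pos_of_nonneg (mul_pos ha hsq) (mul_nonneg hb hdiff)

section Geometric

variable (hρ : |ρ| < 1) (hab : a * ρ = b * (1 - ρ) ^ 2) (hy : ∀ k, y k = ρ ^ (k + 1))
include hρ hab hy

/-- The geometric sequence `ρ^(k+1)` is a critical point of `pathEnergy a b 1`. -/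
theorem pathEnergy_geometric_linear_term_eq_zero (hh : Summable fun k => h k ^ 2) :
    a * ∑' k, y k * h k +
      b * ((y 0 - 1) * h 0 + ∑' k, (y k - y (k + 1)) * (h k - h (k + 1))) = 0 := by
  have hg : Summable fun k => (ρ ^ k) ^ 2 := by
    refine (summable_geometric_of_lt_one (sq_nonneg ρ) ((sq_lt_one_iff_abs_lt_one ρ).2 hρ)).congr
      fun k => ?_
    rw [← pow_mul, ← pow_mul, mul_comm]
  have hC := hg.mul_of_summable_sq hh
  have hshift : ∑' k, ρ ^ (k + 1) * h (k + 1) = ∑' k, ρ ^ k * h k - h 0 := by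
    rw [hC.tsum_eq_zero_add, pow_zero, one_mul, add_sub_cancel_left]
  set C := ∑' k, ρ ^ k * h k
  have hlin : ∑' k, y k * h k = ρ * C := by
    rw [← tsum_mul_left]; exact tsum_congr fun k => by rw [hy]; ring
  have hdiff : ∑' k, (y k - y (k + 1)) * (h k - h (k + 1)) = (1 - ρ) * (ρ * C - (C - h 0)) := by
    have e : ∀ k, (y k - y (k + 1)) * (h k - h (k + 1)) =
        (1 - ρ) * ρ * (ρ ^ k * h k) - (1 - ρ) * (ρ ^ (k + 1) * h (k + 1)) := fun k => by
      rw [hy, hy]; ring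
    rw [tsum_congr e, (hC.mul_left _).tsum_sub (((summable_nat_add_iff 1).2 hC).mul_left _),
      tsum_mul_left, tsum_mul_left, hshift]
    ring
  rw [hlin, hdiff, hy 0]
  linear_combination C * hab

theorem pathEnergy_geometric : pathEnergy a b 1 y = b * (1 - ρ) := by
  have hρ2 : ρ ^ 2 < 1 := (sq_lt_one_iff_abs_lt_one ρ).2 hρ
  have hsq : ∑' k, y k ^ 2 = ρ ^ 2 / (1 - ρ ^ 2) := by
    rw [tsum_congr fun k => show y k ^ 2 = ρ ^ 2 * (ρ ^ 2) ^ k by rw [hy]; ring, tsum_mul_left,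
      tsum_geometric_of_lt_one (sq_nonneg ρ) hρ2, div_eq_mul_inv]
  have hdiff : ∑' k, (y k - y (k + 1)) ^ 2 = (1 - ρ) ^ 2 * (ρ ^ 2 / (1 - ρ ^ 2)) := by
    rw [tsum_congr fun k => show (y k - y (k + 1)) ^ 2 = (1 - ρ) ^ 2 * y k ^ 2 by rw [hy, hy]; ring,
      tsum_mul_left, hsq]
  have h1 : 1 - ρ ^ 2 ≠ 0 := by linarith
  have h2 : 1 + ρ ≠ 0 := by linarith [neg_abs_le ρ]
  rw [pathEnergy, hsq, hdiff, hy 0]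
  field_simp
  linear_combination ρ * hab

end Geometric

end PathEnergy

namespace ell2

theorem summable_sq (x : ell2) : Summable fun k => x k ^ 2 :=
  (lp.summable_inner x x).congr fun k => by rw [Real.inner_apply, sq]

theorem norm_sq_eq_tsum (x : ell2) : ‖x‖ ^ 2 = ∑' k, x k ^ 2 := by
  rw [← real_inner_self_eq_norm_sq, lp.inner_eq_tsum]
  exact tsum_congr fun k => by rw [Real.inner_apply, sq]

end ell2

theorem fNodeV1_add_fNodeV2_add_fNodeV3 (μ L : ℝ) (x : ell2) :
    fNodeV1 μ L x + fNodeV2 μ x + fNodeV3 μ L x = pathEnergy (3 * μ / 2) ((L - μ) / 4) 1 x := by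
  have hΔ := (ell2.summable_sq x).sq_sub_succ
  have hsplit := tsum_even_add_odd (f := fun k => (x k - x (k + 1)) ^ 2)
    (hΔ.comp_injective (i := fun l => 2 * l) fun a b (hab : 2 * a = 2 * b) => by omega)
    (hΔ.comp_injective (i := fun l => 2 * l + 1) fun a b (hab : 2 * a + 1 = 2 * b + 1) => by omega)
  simp only [add_assoc, Nat.reduceAdd] at hsplit
  rw [fNodeV1, fNodeV2, fNodeV3, pathEnergy, ell2.norm_sq_eq_tsum, ← hsplit]
  ring

theorem sum_fNode (μ L : ℝ) (m : ℕ) (x : ell2) :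
    ∑ i ∈ Finset.Icc 1 (3 * m), fNode μ L m i x =
      m * (fNodeV1 μ L x + fNodeV2 μ x + fNodeV3 μ L x) := by
  have hblock : ∀ (a b : ℕ) (v : ℝ), b - a = m → (∀ i ∈ Finset.Ioc a b, fNode μ L m i x = v) →
      ∑ i ∈ Finset.Ioc a b, fNode μ L m i x = m * v := fun a b v hab hv => by
    rw [Finset.sum_congr rfl hv, Finset.sum_const, Nat.card_Ioc, hab, nsmul_eq_mul]
  have hIcc : Finset.Icc 1 (3 * m) = Finset.Ioc 0 (3 * m) := by
    ext; simp only [Finset.mem_Icc, Finset.mem_Ioc]; omega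
  rw [hIcc, ← Finset.sum_Ioc_consecutive _ (Nat.zero_le (2 * m)) (by omega : 2 * m ≤ 3 * m),
    ← Finset.sum_Ioc_consecutive _ (Nat.zero_le m) (by omega : m ≤ 2 * m),
    hblock 0 m (fNodeV1 μ L x) (by omega) fun i hi => ?_,
    hblock m (2 * m) (fNodeV2 μ x) (by omega) fun i hi => ?_,
    hblock (2 * m) (3 * m) (fNodeV3 μ L x) (by omega) fun i hi => ?_]
  · ring
  all_goals
    rw [Finset.mem_Ioc] at hi
    simp only [fNode]
    split_ifs <;> first | rfl | omega

theorem abs_div_add_one_lt_one {s : ℝ} (hs : 0 < s) : |(s - 1) / (s + 1)| < 1 := by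
  rw [abs_div, abs_of_pos (by linarith : 0 < s + 1), div_lt_one (by linarith), abs_sub_lt_iff]
  constructor <;> linarith

theorem abs_lt_one_and_critical_of_rho_eq {μ L ρ : ℝ} (hμ : 0 < μ) (hμL : μ < L)
    (hρ : ρ = (Real.sqrt (2 * L / (3 * μ) + 1 / 3) - 1) /
      (Real.sqrt (2 * L / (3 * μ) + 1 / 3) + 1)) :
    |ρ| < 1 ∧ 3 * μ / 2 * ρ = (L - μ) / 4 * (1 - ρ) ^ 2 := by
  set s := Real.sqrt (2 * L / (3 * μ) + 1 / 3)
  have hL : 0 < L := hμ.trans hμL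
  have hs2 : s ^ 2 = 2 * L / (3 * μ) + 1 / 3 := Real.sq_sqrt (by positivity)
  have hs : 0 < s := Real.sqrt_pos.2 (by positivity)
  refine ⟨hρ ▸ abs_div_add_one_lt_one hs, ?_⟩
  field_simp at hs2
  rw [hρ]
  field_simp
  linear_combination 4 * hs2

/-- **Solution of the lower-bound instance (Lemma A.1).**
The function `x ↦ ∑_{i=1}^n f_i(x)` attains its minimum over `ℓ²` at the unique point `x*`
with (paper) coordinates `x*_l = ρ^l` (`l ≥ 1`), and the minimum value equals
`n(L − μ)(1 − ρ)/12`. -/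
theorem lower_bound_instance_solution (μ L : ℝ) (hμ : 0 < μ) (hμL : μ < L)
    (ρ : ℝ)
    (hρ : ρ = (Real.sqrt (2 * L / (3 * μ) + 1 / 3) - 1) /
      (Real.sqrt (2 * L / (3 * μ) + 1 / 3) + 1))
    (m : ℕ) (hm : 1 ≤ m)
    (xs : ell2) (hxs : ∀ l : ℕ, xs l = ρ ^ (l + 1)) :
    (∑ i ∈ Finset.Icc 1 (3 * m), fNode μ L m i xs) =
        (3 * m : ℝ) * (L - μ) * (1 - ρ) / 12 ∧
    (∀ x : ell2, x ≠ xs →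
      (∑ i ∈ Finset.Icc 1 (3 * m), fNode μ L m i xs) <
        ∑ i ∈ Finset.Icc 1 (3 * m), fNode μ L m i x) := by
  obtain ⟨hρ1, hstat⟩ := abs_lt_one_and_critical_of_rho_eq hμ hμL hρ
  have hsum (x : ell2) : ∑ i ∈ Finset.Icc 1 (3 * m), fNode μ L m i x =
      m * pathEnergy (3 * μ / 2) ((L - μ) / 4) 1 x := by
    rw [sum_fNode, fNodeV1_add_fNodeV2_add_fNodeV3]
  refine ⟨by rw [hsum, pathEnergy_geometric hρ1 hstat hxs]; ring, fun x hx => ?_⟩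
  have hh := ell2.summable_sq (x - xs)
  rw [lp.coeFn_sub] at hh
  have hne : ⇑x - ⇑xs ≠ 0 := sub_ne_zero.2 fun h => hx (lp.ext h)
  have hpos : 0 < pathEnergy (3 * μ / 2) ((L - μ) / 4) 0 (⇑x - ⇑xs) :=
    pathEnergy_pos_of_ne_zero (by positivity) (by linarith) hh hne
  rw [hsum, hsum, ← add_sub_cancel ⇑xs ⇑x, pathEnergy_add (ell2.summable_sq xs) hh,
    pathEnergy_geometric_linear_term_eq_zero hρ1 hstat hxs hh]
  exact mul_lt_mul_of_pos_left (by linarith) (by exact_mod_cast hm)
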